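/- Feasibility of the evacuation problem: if exactly one station i₀ is blocked (Ĵ_{i₀}=1, Ĵ_j=0 otherwise), Y is nonnegative, X has entries x_j > 1 for all j, and Σ_{j ≠ i₀} (x_j − 1)·y_j ≥ y_{i₀}, then there exists a nonnegative matrix K with zero diagonal, zero rows for all indices other than i₀, zero column at i₀, row sum Σ_j k_{i₀,j} = y_{i₀}, and column sums satisfying y_j + Σ_i k_{i,j} ≤ x_j·y_j for all j ≠ i₀. -/
import Mathlib


/-- feasibility of the evacuation problem for a single blocked station. -/
theorem stmt_3 (n : ℕ) (hn : 2 ≤ n) (i₀ : Fin n) (Y X : Fin n → ℝ)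
    (hY : ∀ i, 0 ≤ Y i) (hX : ∀ j, 1 < X j)
    (hspare : Y i₀ ≤ ∑ j ∈ Finset.univ.filter (· ≠ i₀), (X j - 1) * Y j) :
    ∃ K : Matrix (Fin n) (Fin n) ℝ,
      (∀ i j, 0 ≤ K i j) ∧ (∀ i, K i i = 0) ∧
      (∀ i, i ≠ i₀ → ∀ j, K i j = 0) ∧ (∀ i, K i i₀ = 0) ∧
      (∑ j, K i₀ j = Y i₀) ∧
      (∀ j, j ≠ i₀ → Y j + ∑ i, K i j ≤ X j * Y j) := by
  set S : ℝ := ∑ j ∈ Finset.univ.filter (· ≠ i₀), (X j - 1) * Y j with hSdef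
  have hterm : ∀ j : Fin n, (0:ℝ) ≤ (X j - 1) * Y j := fun j =>
    mul_nonneg (by linarith [hX j]) (hY j)
  have hSnonneg : 0 ≤ S := Finset.sum_nonneg fun j _ => hterm j
  by_cases hS : S = 0
  · refine ⟨0, ?_, ?_, ?_, ?_, ?_, ?_⟩
    · intro i j; simp
    · intro i; simp
    · intro i _ j; simp
    · intro i; simp
    · have : Y i₀ = 0 := le_antisymm (by rw [← hS]; exact hspare) (hY i₀)
      simp [Matrix.zero_apply, this]
    · intro j _
      have := hY j
      have := hX j
      simp only [Matrix.zero_apply, Finset.sum_const_zero, add_zero]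
      nlinarith
  · have hSpos : 0 < S := lt_of_le_of_ne hSnonneg (Ne.symm hS)
    have htle : Y i₀ / S ≤ 1 := by
      rw [div_le_one hSpos]; exact hspare
    have htn : 0 ≤ Y i₀ / S := div_nonneg (hY i₀) hSnonneg
    refine ⟨fun i j => if i = i₀ ∧ j ≠ i₀ then (X j - 1) * Y j * (Y i₀ / S) else 0,
      ?_, ?_, ?_, ?_, ?_, ?_⟩
    · intro i j
      by_cases h : i = i₀ ∧ j ≠ i₀
      · simp only []; rw [if_pos h]; exact mul_nonneg (hterm j) htn
      · simp [h]
    · intro i; simp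
    · intro i hi j; simp [hi]
    · intro i; simp
    · have : (∑ j, if i₀ = i₀ ∧ j ≠ i₀ then (X j - 1) * Y j * (Y i₀ / S) else 0)
          = ∑ j ∈ Finset.univ.filter (· ≠ i₀), (X j - 1) * Y j * (Y i₀ / S) := by
        rw [Finset.sum_filter]
        exact Finset.sum_congr rfl fun j _ => by by_cases h : j = i₀ <;> simp [h]
      rw [this, ← Finset.sum_mul, ← hSdef, mul_div_cancel₀ _ hS]
    · intro j hj
      have hsum : (∑ i, if i = i₀ ∧ j ≠ i₀ then (X j - 1) * Y j * (Y i₀ / S) else 0)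
          = (X j - 1) * Y j * (Y i₀ / S) := by
        rw [Finset.sum_eq_single i₀]
        · simp [hj]
        · intro b _ hb; simp [hb]
        · intro h; exact absurd (Finset.mem_univ i₀) h
      rw [hsum]
      have : (X j - 1) * Y j * (Y i₀ / S) ≤ (X j - 1) * Y j * 1 :=
        mul_le_mul_of_nonneg_left htle (hterm j)
      nlinarith
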